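/- arXiv:1712.02911 — 2 statements merged into one kernel-verified Lean document; each statement's English description precedes it below -/
import Mathlib

section
/- Let {B i j} be an LSSD(v,k,λ;w) with linking parameters μ, ν, where v, w ≥ 2 are natural numbers and k, λ, μ, ν are real parameters. Then the multipartite complement family B' i j := J − B i j is an LSSD(v, v−k, v−2k+λ; w) with linking parameters μ' = v−2k+ν and ν' = v−2k+μ; in particular, if the original system is μ-heavy (μ > ν) then its complement satisfies ν' > μ'. -/
/-!
Every block `B i j` has all row and column sums equal to `k`, so `B i j * J = J * B i j = k • J`.
Hence `(J - M) * (J - N) = (v - 2k) • J + M * N` for any two blocks `M`, `N`, and this single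
identity turns the design equations and the linking equations of `B` into those of `J - B`.
-/

open Matrix

/-- The all-ones `v × v` real matrix. -/
def J (v : ℕ) : Matrix (Fin v) (Fin v) ℝ := Matrix.of fun _ _ => 1

/-- A linked system of symmetric designs `LSSD(v,k,λ;w)` with linking parameters `μ, ν`:
a family of `v × v` 0-1 matrices `B i j`, one for each ordered pair of distinct fibers,
with `B j i = (B i j)ᵀ`, each `B i j` the incidence matrix of a symmetric
`(v,k,λ)`-design, and the linking equations between any three distinct fibers. -/
def IsLSSD (v w : ℕ) (k lam mu nu : ℝ)
    (B : Fin w → Fin w → Matrix (Fin v) (Fin v) ℝ) : Prop :=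
  (∀ i j : Fin w, i ≠ j → ∀ a b : Fin v, B i j a b = 0 ∨ B i j a b = 1) ∧
  (∀ i j : Fin w, i ≠ j → B j i = (B i j)ᵀ) ∧
  (∀ i j : Fin w, i ≠ j →
    B i j * (B i j)ᵀ = (k - lam) • (1 : Matrix (Fin v) (Fin v) ℝ) + lam • J v ∧
    (B i j)ᵀ * B i j = (k - lam) • (1 : Matrix (Fin v) (Fin v) ℝ) + lam • J v) ∧
  (∀ h i j : Fin w, h ≠ i → h ≠ j → i ≠ j →
    B i h * B h j = nu • J v + (mu - nu) • B i j)

section AllOnes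

variable {v : ℕ}

@[simp]
lemma J_apply (a b : Fin v) : J v a b = 1 := rfl

@[simp]
lemma transpose_J : (J v)ᵀ = J v := by
  ext a b
  rfl

lemma J_mul_J : J v * J v = (v : ℝ) • J v := by
  ext a b
  simp [mul_apply]

lemma mul_J_eq_smul_of_mul_transpose {M : Matrix (Fin v) (Fin v) ℝ} {k lam : ℝ}
    (h01 : ∀ a b, M a b = 0 ∨ M a b = 1)
    (hM : M * Mᵀ = (k - lam) • (1 : Matrix (Fin v) (Fin v) ℝ) + lam • J v) :
    M * J v = k • J v := by
  ext a b
  have hdiag := congrFun (congrFun hM a) a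
  -- the diagonal of `M * Mᵀ` is the row sum, since `x * x = x` for `x ∈ {0, 1}`
  have hsq : ∀ c, M a c * M a c = M a c := fun c => by rcases h01 a c with h | h <;> simp [h]
  simp only [mul_apply, transpose_apply, hsq, Matrix.add_apply, Matrix.smul_apply, one_apply_eq,
    J_apply, smul_eq_mul, mul_one] at hdiag
  simp [mul_apply, hdiag]

lemma J_sub_mul_J_sub {M N : Matrix (Fin v) (Fin v) ℝ} {a b : ℝ}
    (hM : M * J v = a • J v) (hN : J v * N = b • J v) :
    (J v - M) * (J v - N) = ((v : ℝ) - a - b) • J v + M * N := by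
  rw [sub_mul, mul_sub, mul_sub, J_mul_J, hM, hN]
  module

end AllOnes

namespace IsLSSD

variable {v w : ℕ} {k lam mu nu : ℝ} {B : Fin w → Fin w → Matrix (Fin v) (Fin v) ℝ}

lemma mul_J (hB : IsLSSD v w k lam mu nu B) {i j : Fin w} (hij : i ≠ j) :
    B i j * J v = k • J v :=
  mul_J_eq_smul_of_mul_transpose (hB.1 i j hij) (hB.2.2.1 i j hij).1

lemma J_mul (hB : IsLSSD v w k lam mu nu B) {i j : Fin w} (hij : i ≠ j) :
    J v * B i j = k • J v := by
  rw [← transpose_transpose (B i j), ← hB.2.1 i j hij, ← transpose_J, ← transpose_mul,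
    hB.mul_J hij.symm, transpose_smul, transpose_J]

lemma compl (hB : IsLSSD v w k lam mu nu B) :
    IsLSSD v w ((v : ℝ) - k) ((v : ℝ) - 2 * k + lam)
      ((v : ℝ) - 2 * k + nu) ((v : ℝ) - 2 * k + mu) (fun i j => J v - B i j) := by
  obtain ⟨h01, hsymm, hdesign, hlink⟩ := id hB
  refine ⟨fun i j hij a b => ?_, fun i j hij => ?_, fun i j hij => ⟨?_, ?_⟩,
    fun h i j hhi hhj hij => ?_⟩
  · rcases h01 i j hij a b with h | h <;> simp [h]
  · simp only [hsymm i j hij, transpose_sub, transpose_J]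
  · rw [transpose_sub, transpose_J, ← hsymm i j hij,
      J_sub_mul_J_sub (hB.mul_J hij) (hB.J_mul hij.symm), hsymm i j hij, (hdesign i j hij).1]
    module
  · rw [transpose_sub, transpose_J, ← hsymm i j hij,
      J_sub_mul_J_sub (hB.mul_J hij.symm) (hB.J_mul hij), hsymm i j hij, (hdesign i j hij).2]
    module
  · rw [J_sub_mul_J_sub (hB.mul_J hhi.symm) (hB.J_mul hhj), hlink h i j hhi hhj hij]
    module

end IsLSSD

theorem stmt_1_general (v w : ℕ) (k lam mu nu : ℝ)
    (B : Fin w → Fin w → Matrix (Fin v) (Fin v) ℝ)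
    (hB : IsLSSD v w k lam mu nu B) :
    IsLSSD v w ((v : ℝ) - k) ((v : ℝ) - 2 * k + lam)
        ((v : ℝ) - 2 * k + nu) ((v : ℝ) - 2 * k + mu)
        (fun i j => J v - B i j) ∧
    (mu > nu → (v : ℝ) - 2 * k + mu > (v : ℝ) - 2 * k + nu) :=
  ⟨hB.compl, fun h => by linarith⟩

theorem stmt_1 (v w : ℕ) (hv : 2 ≤ v) (hw : 2 ≤ w) (k lam mu nu : ℝ)
    (B : Fin w → Fin w → Matrix (Fin v) (Fin v) ℝ)
    (hB : IsLSSD v w k lam mu nu B) :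
    IsLSSD v w ((v : ℝ) - k) ((v : ℝ) - 2 * k + lam)
        ((v : ℝ) - 2 * k + nu) ((v : ℝ) - 2 * k + mu)
        (fun i j => J v - B i j) ∧
    (mu > nu → (v : ℝ) - 2 * k + mu > (v : ℝ) - 2 * k + nu) :=
  stmt_1_general v w k lam mu nu B hB
end

section
/- Let v, k, λ, s be positive integers with s² = k − λ, k·(k−1) = λ·(v−1), and 1 < k < v−1, and suppose that v divides k·(k+s) or v divides k·(k−s). Then v is not prime. -/
/-!
If `v` is prime and `v ∣ k (k ± s)`, then `v ∣ k ± s` because `0 < k < v`. But the design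
equations pin `k ± s` strictly between `0` and `v`: `s² = k - λ < k` gives `s < k`, and
eliminating `λ` gives `λ (v - 1 - k - s) = k (s² - s - 1) + s³`, which is positive once `s ≥ 2`;
the case `s = 1` would force `v = k + 1`.
-/

theorem Prime.not_dvd_mul_of_pos_of_lt {p a b : ℤ} (hp : Prime p) (ha : 0 < a) (hap : a < p)
    (hb : 0 < b) (hbp : b < p) : ¬ p ∣ a * b := by
  rintro hdvd
  rcases hp.dvd_mul.mp hdvd with h | h
  · exact absurd (Int.le_of_dvd ha h) (not_le.mpr hap)
  · exact absurd (Int.le_of_dvd hb h) (not_le.mpr hbp)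

namespace SymmetricDesign

variable {v k lam s : ℤ}

theorem lt_of_sq_eq_sub (hs : 0 < s) (hlam : 0 < lam) (hs2 : s ^ 2 = k - lam) : s < k := by
  nlinarith

theorem two_le_of_lt_sub_one (hs : 0 < s) (hs2 : s ^ 2 = k - lam)
    (hdes : k * (k - 1) = lam * (v - 1)) (hk1 : 1 < k) (hkv : k < v - 1) : 2 ≤ s := by
  by_contra! h
  obtain rfl : s = 1 := by omega
  have hlam : lam = k - 1 := by linarith
  subst hlam
  have : k = v - 1 := mul_right_cancel₀ (sub_ne_zero.mpr hk1.ne') (by linarith)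
  omega

theorem add_lt (hk : 0 < k) (hlam : 0 < lam) (hs : 2 ≤ s) (hs2 : s ^ 2 = k - lam)
    (hdes : k * (k - 1) = lam * (v - 1)) : k + s < v := by
  have key : lam * (v - 1 - k - s) = k * (s ^ 2 - s - 1) + s ^ 3 := by
    linear_combination hdes.symm - (k + s) * hs2
  have hpos : 0 < lam * (v - 1 - k - s) := by
    rw [key]
    have : 0 < s ^ 2 - s - 1 := by nlinarith
    positivity
  have := pos_of_mul_pos_right hpos hlam.le
  omega

end SymmetricDesign

open SymmetricDesign in
theorem stmt_3_general (v k lam s : ℤ) (hlam : 0 < lam) (hs : 0 < s)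
    (hs2 : s ^ 2 = k - lam) (hdes : k * (k - 1) = lam * (v - 1))
    (hk1 : 1 < k) (hkv : k < v - 1)
    (hdvd : v ∣ k * (k + s) ∨ v ∣ k * (k - s)) :
    ¬ Prime v := by
  intro hp
  have hsk : s < k := lt_of_sq_eq_sub hs hlam hs2
  have hksv : k + s < v := add_lt (by omega) hlam (two_le_of_lt_sub_one hs hs2 hdes hk1 hkv) hs2 hdes
  rcases hdvd with h | h
  · exact hp.not_dvd_mul_of_pos_of_lt (by omega) (by omega) (by omega) hksv h
  · exact hp.not_dvd_mul_of_pos_of_lt (by omega) (by omega) (by omega) (by omega) h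

theorem stmt_3 (v k lam s : ℤ) (hv : 0 < v) (hk : 0 < k) (hlam : 0 < lam) (hs : 0 < s)
    (hs2 : s ^ 2 = k - lam) (hdes : k * (k - 1) = lam * (v - 1))
    (hk1 : 1 < k) (hkv : k < v - 1)
    (hdvd : v ∣ k * (k + s) ∨ v ∣ k * (k - s)) :
    ¬ Prime v :=
  stmt_3_general v k lam s hlam hs hs2 hdes hk1 hkv hdvd
end
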